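/- If M ≺ C is a model of T and A is a set with P^M ⊆ A ⊆ M, then A is complete. -/

import Mathlib

open FirstOrder FirstOrder.Language Cardinal Set

universe u v

namespace OverP

/-- `f` fixes `B` pointwise. -/
def FixesPointwise {C : Type u} {N : Set C} (f : ↥N → C) (B : Set C) : Prop :=
  ∀ x : ↥N, (x : C) ∈ B → f x = x

variable {L : FirstOrder.Language.{u, u}} {C : Type u} [L.Structure C]

/-- The interpretation `P^C` of the distinguished unary predicate `P` in the monster `C`. -/
def PSet (P : L.Relations 1) : Set C := {x | Structure.RelMap P ![x]}

/-- `|T|`, the cardinality of the theory: the number of symbols plus `ℵ₀`. -/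
noncomputable def TCard (L : FirstOrder.Language.{u, u}) : Cardinal.{u} := L.card ⊔ ℵ₀

/-- `A` is a complete set: any existential statement `(∃ x̄ ⊆ P) ψ(x̄, b̄)` with parameters
`b̄ ⊆ A` that holds in `C` has a witness inside `P ∩ A`. -/
def IsComplete (P : L.Relations 1) (A : Set C) : Prop :=
  ∀ (n m : ℕ) (ψ : L.Formula (Fin n ⊕ Fin m)) (b : Fin m → C),
    (∀ i, b i ∈ A) →
    (∃ a : Fin n → C, (∀ i, a i ∈ PSet P) ∧ ψ.Realize (Sum.elim a b)) →
    ∃ a : Fin n → C, (∀ i, a i ∈ PSet P ∩ A) ∧ ψ.Realize (Sum.elim a b)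

/-- `tp(c̄/A)`: the complete type of the tuple `c̄` over the parameter set `A`, represented as
the set of formulas in variables `α` with parameter-variables indexed by `↥A` (interpreted by
inclusion) that `c̄` satisfies in `C`. -/
def typeOf (A : Set C) {α : Type v} (c : α → C) : Set (L.Formula (α ⊕ ↥A)) :=
  {φ | φ.Realize (Sum.elim c (Subtype.val : ↥A → C))}

/-- A set of formulas over parameters `A` is realized by a tuple all of whose entries lie
in `X`. -/
def RealizedIn (X : Set C) {A : Set C} {α : Type v} (p : Set (L.Formula (α ⊕ ↥A))) : Prop :=
  ∃ c : α → C, (∀ i, c i ∈ X) ∧ ∀ φ ∈ p, φ.Realize (Sum.elim c (Subtype.val : ↥A → C))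

/-- Consistency of a partial type over `A` (in the monster model: realizability in `C`). -/
def Consistent {A : Set C} {α : Type v} (p : Set (L.Formula (α ⊕ ↥A))) : Prop :=
  ∃ c : α → C, ∀ φ ∈ p, φ.Realize (Sum.elim c (Subtype.val : ↥A → C))

/-- Semantic entailment `r ⊢ p` between sets of formulas over `A`. -/
def Entails {A : Set C} {α : Type v} (r p : Set (L.Formula (α ⊕ ↥A))) : Prop :=
  ∀ c : α → C, (∀ φ ∈ r, φ.Realize (Sum.elim c (Subtype.val : ↥A → C))) →
    ∀ φ ∈ p, φ.Realize (Sum.elim c (Subtype.val : ↥A → C))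

/-- A partial type `p` is `λ`-isolated if some subset `r ⊆ p` with `|r| < λ` entails it. -/
def IsIsolated (lam : Cardinal.{u}) {A : Set C} {α : Type v}
    (p : Set (L.Formula (α ⊕ ↥A))) : Prop :=
  ∃ r ⊆ p, #↥r < Cardinal.lift.{v} lam ∧ Entails r p

/-- `M` is `λ`-saturated relative to `X`: every type over a subset of `M` of cardinality `< λ`
realized by a tuple from `X` is realized by a tuple from `M`. -/
def IsSaturatedIn (lam : Cardinal.{u}) (M X : Set C) : Prop :=
  ∀ B : Set C, B ⊆ M → #↥B < lam →
    ∀ (n : ℕ) (p : Set (L.Formula (Fin n ⊕ ↥B))),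
      RealizedIn (L := L) X p → RealizedIn (L := L) M p

/-- `M` is `λ`-saturated: every consistent type over a subset of `M` of cardinality `< λ`
is realized in `M`. -/
def IsSaturated (lam : Cardinal.{u}) (M : Set C) : Prop :=
  IsSaturatedIn (L := L) lam M Set.univ

/-- `M` is (the universe of) an elementary submodel of the monster `C` (Tarski–Vaught test). -/
def IsElementary (M : Set C) : Prop :=
  ∀ (n : ℕ) (φ : L.Formula (Fin n ⊕ Fin 1)) (b : Fin n → C),
    (∀ i, b i ∈ M) →
    (∃ y : C, φ.Realize (Sum.elim b fun _ => y)) →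
    ∃ y ∈ M, φ.Realize (Sum.elim b fun _ => y)

/-- The induced structure on a subset of `C`, in a language with no function symbols. -/
def inducedStructure (hf : ∀ k, IsEmpty (L.Functions k)) (A : Set C) : L.Structure ↥A where
  funMap {k} f _ := ((hf k).false f).elim
  RelMap {k} r x := Structure.RelMap r fun i => (x i : C)

/-- `A ≡ B`: the substructures `C|_A` and `C|_B` are elementarily equivalent. -/
def EquivSets (hf : ∀ k, IsEmpty (L.Functions k)) (A B : Set C) : Prop :=
  letI := inducedStructure hf A
  letI := inducedStructure hf B
  (↥A) ≅[L] (↥B)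

/-- `X` is an elementary substructure of `Y` (both viewed as substructures of `C`). -/
def IsElemPair (hf : ∀ k, IsEmpty (L.Functions k)) (X Y : Set C) : Prop :=
  ∃ h : X ⊆ Y,
    letI := inducedStructure hf X
    letI := inducedStructure hf Y
    ∀ (n : ℕ) (φ : L.Formula (Fin n)) (a : Fin n → ↥X),
      φ.Realize a ↔ φ.Realize (fun i => Set.inclusion h (a i))

/-- The tuple `c̄` is weakly orthogonal to `P` over `A`:
`P ∩ (A ∪ c̄) = P ∩ A` and `A ∪ c̄` is complete (i.e. `tp(c̄/A) ∈ S_*(A)`). -/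
def IsStarTuple (P : L.Relations 1) (A : Set C) {α : Type v} (c : α → C) : Prop :=
  PSet P ∩ (A ∪ Set.range c) = PSet P ∩ A ∧ IsComplete P (A ∪ Set.range c)

/-- `S_*(A)`: complete `n`-types over `A` weakly orthogonal to `P`. -/
def starTypes (P : L.Relations 1) (A : Set C) (n : ℕ) :
    Set (Set (L.Formula (Fin n ⊕ ↥A))) :=
  {p | ∃ c : Fin n → C, p = typeOf A c ∧ IsStarTuple P A c}

/-- `A` is stable over `P`: for every `A' ≡ A`, `|S_*(A')| ≤ |A'| ^ |T|`. -/
def IsStable (hf : ∀ k, IsEmpty (L.Functions k)) (P : L.Relations 1) (A : Set C) : Prop :=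
  ∀ A' : Set C, EquivSets hf A' A → ∀ n : ℕ, #↥(starTypes P A' n) ≤ #↥A' ^ TCard L

/-- `N` is `λ`-constructible over `B`: `N = B ∪ {d_i : i < o}` for some `λ`-construction,
i.e. each `tp(d_i / B ∪ {d_j : j < i})` is `λ`-isolated. -/
def IsConstructible (lam : Cardinal.{u}) (B N : Set C) : Prop :=
  ∃ (o : Ordinal.{u}) (d : Ordinal.{u} → C),
    N = B ∪ d '' Set.Iio o ∧
    ∀ i < o, IsIsolated lam (typeOf (L := L) (B ∪ d '' Set.Iio i) (fun _ : Fin 1 => d i))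


/-- `f` is an elementary map (with respect to satisfaction in the monster `C`). -/
def IsElementaryMap {N : Set C} (f : ↥N → C) : Prop :=
  ∀ (n : ℕ) (φ : L.Formula (Fin n)) (x : Fin n → ↥N),
    φ.Realize (fun i => ((x i : C))) ↔ φ.Realize (fun i => f (x i))

/-- `N` is `λ`-prime over `B`: it is `λ`-saturated and elementarily embeddable over `B` into
every `λ`-saturated model containing `B`. -/
def IsPrime (lam : Cardinal.{u}) (B N : Set C) : Prop :=
  IsSaturated (L := L) lam N ∧
    ∀ M' : Set C, IsElementary (L := L) M' → IsSaturated (L := L) lam M' → B ⊆ M' →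
      ∃ f : ↥N → C, (∀ x, f x ∈ M') ∧ FixesPointwise f B ∧ IsElementaryMap (L := L) f

/-- `N` is `λ`-atomic over `B`: the type of every finite tuple from `N` over `B` is
`λ`-isolated over some subset of `B` of cardinality `< λ`. -/
def IsAtomic (lam : Cardinal.{u}) (B N : Set C) : Prop :=
  ∀ (n : ℕ) (d : Fin n → C), (∀ i, d i ∈ N) →
    ∃ B₀ : Set C, B₀ ⊆ B ∧ #↥B₀ < lam ∧
      ∃ r : Set (L.Formula (Fin n ⊕ ↥B₀)), #↥r < lam ∧ r ⊆ typeOf (L := L) B₀ d ∧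
        ∀ c : Fin n → C, (∀ φ ∈ r, φ.Realize (Sum.elim c (Subtype.val : ↥B₀ → C))) →
          ∀ φ ∈ typeOf (L := L) B d, φ.Realize (Sum.elim c (Subtype.val : ↥B → C))

/-- The algebraic closure of a set `B` in `C`. -/
def acl (B : Set C) : Set C :=
  {x | ∃ (m : ℕ) (φ : L.Formula (Fin 1 ⊕ Fin m)) (b : Fin m → C),
    (∀ i, b i ∈ B) ∧ φ.Realize (Sum.elim (fun _ => x) b) ∧
    {y : C | φ.Realize (Sum.elim (fun _ => y) b)}.Finite}


/-- Parity of an ordinal: `β` is even if `β = γ + k` with `γ` zero or limit and `k` even. -/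
def OrdEven (β : Ordinal.{u}) : Prop :=
  ∃ (γ : Ordinal.{u}) (k : ℕ), (γ = 0 ∨ Order.IsSuccLimit γ) ∧ Even k ∧ β = γ + k

/-- Consistency for types with parameters from all of `C` (indexed by `C` itself). -/
def ConsistentC {n : ℕ} (p : Set (L.Formula (Fin n ⊕ C))) : Prop :=
  ∃ x : Fin n → C, ∀ φ ∈ p, φ.Realize (Sum.elim x id)

/-- Two sets of formulas are explicitly contradictory. -/
def ExplicitlyContradictory {n : ℕ} (r s : Set (L.Formula (Fin n ⊕ C))) : Prop :=
  ∃ φ, φ ∈ r ∧ Formula.not φ ∈ s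

/-- `r` is a `Δ`-type over `A`: it consists of formulas `±ψ(x̄, ā)` with `ψ ∈ Δ`, `ā ⊆ A`. -/
def IsDeltaTypeOver {n : ℕ} (Δ : Set (Σ k : ℕ, L.Formula (Fin n ⊕ Fin k))) (A : Set C)
    (r : Set (L.Formula (Fin n ⊕ C))) : Prop :=
  ∀ φ ∈ r, ∃ (k : ℕ) (ψ : L.Formula (Fin n ⊕ Fin k)) (a : Fin k → C),
    (⟨k, ψ⟩ : Σ k : ℕ, L.Formula (Fin n ⊕ Fin k)) ∈ Δ ∧ (∀ i, a i ∈ A) ∧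
    (φ = ψ.relabel (Sum.map id a) ∨ φ = Formula.not (ψ.relabel (Sum.map id a)))

/-- The formula `(∀ z̄ ⊆ P)[ψ(x̄, d̄, z̄) ↔ Θ(z̄, b̄)]` as a formula in `x̄` with parameters. -/
noncomputable def defFml (P : L.Relations 1) {n m l s : ℕ}
    (ψ : L.Formula (Fin n ⊕ (Fin m ⊕ Fin l))) (Θ : L.Formula (Fin l ⊕ Fin s))
    (d : Fin m → C) (b : Fin s → C) : L.Formula (Fin n ⊕ C) :=
  Formula.iAlls (Fin l)
    (Formula.imp
      (BoundedFormula.iInf fun k : Fin l =>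
        (P.formula₁ (Term.var (Sum.inr k)) : L.Formula ((Fin n ⊕ C) ⊕ Fin l)))
      (Formula.iff
        (ψ.relabel (Sum.elim (fun i => Sum.inl (Sum.inl i))
          (Sum.elim (fun j => Sum.inl (Sum.inr (d j))) Sum.inr)))
        (Θ.relabel (Sum.elim Sum.inr (fun j => Sum.inl (Sum.inr (b j)))))))

/-- `Ψ` is a uniform family of definitions for `ψ`-types over `P ∩ A` (as in Fact 10):
for every `ψ(x̄, ȳ, z̄)` and `ā, d̄ ⊆ A` there is `c̄ ⊆ A ∩ P` such that for all `z̄ ⊆ A ∩ P`,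
`ψ(ā, d̄, z̄)` holds iff `Ψ_ψ(z̄, c̄)` holds. -/
def IsUniformDefFamily (P : L.Relations 1) (A : Set C)
    (Ψ : ∀ (n m l : ℕ), L.Formula (Fin n ⊕ (Fin m ⊕ Fin l)) →
      Σ s : ℕ, L.Formula (Fin l ⊕ Fin s)) : Prop :=
  ∀ (n m l : ℕ) (ψ : L.Formula (Fin n ⊕ (Fin m ⊕ Fin l))) (a : Fin n → C) (dm : Fin m → C),
    (∀ i, a i ∈ A) → (∀ j, dm j ∈ A) →
    ∃ c : Fin (Ψ n m l ψ).1 → C, (∀ i, c i ∈ A ∩ PSet P) ∧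
      ∀ z : Fin l → C, (∀ k, z k ∈ A ∩ PSet P) →
        (ψ.Realize (Sum.elim a (Sum.elim dm z)) ↔ (Ψ n m l ψ).2.Realize (Sum.elim z c))

-- The rank `R^n_A(p, Δ₁, Δ₂, λ) ≥ α` of Definition 3.9,
-- relative to a fixed uniform definition family `Ψ`.
open Classical in
noncomputable def RankGE (P : L.Relations 1) (A : Set C) (n : ℕ)
    (Δ₁ : Set (Σ k : ℕ, L.Formula (Fin n ⊕ Fin k)))
    (Δ₂ : Set (Σ m : ℕ, Σ l : ℕ, L.Formula (Fin n ⊕ (Fin m ⊕ Fin l))))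
    (Ψ : ∀ (n' m l : ℕ), L.Formula (Fin n' ⊕ (Fin m ⊕ Fin l)) →
      Σ s : ℕ, L.Formula (Fin l ⊕ Fin s))
    (lam : Cardinal.{u}) : Ordinal.{u} → Set (L.Formula (Fin n ⊕ C)) → Prop
  | α, p =>
    if α = 0 then ConsistentC p
    else if hs : ∃ β : Ordinal.{u}, α = β + 1 then
      if OrdEven hs.choose then
        -- clause (iii): α = β + 1, β even
        ∀ μ < lam, ∀ q ⊆ p, q.Finite →
          ∃ R : Set (Set (L.Formula (Fin n ⊕ C))),
            μ + 1 ≤ #↥R ∧ (∀ r ∈ R, IsDeltaTypeOver Δ₁ A r) ∧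
            R.Pairwise ExplicitlyContradictory ∧
            ∀ r ∈ R, RankGE P A n Δ₁ Δ₂ Ψ lam hs.choose (q ∪ r)
      else
        -- clause (iv): α = β + 1, β odd
        ∀ μ < lam, ∀ q ⊆ p, q.Finite →
          ∀ (ι : Type u), #ι ≤ μ + 1 →
          ∀ g : ι → (Σ m : ℕ, Σ l : ℕ, L.Formula (Fin n ⊕ (Fin m ⊕ Fin l))),
            (∀ i, g i ∈ Δ₂) →
          ∀ d : (i : ι) → Fin (g i).1 → C, (∀ i j, d i j ∈ A) →
          ∃ b : (i : ι) → Fin (Ψ n (g i).1 (g i).2.1 (g i).2.2).1 → C,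
            (∀ i j, b i j ∈ A ∩ PSet P) ∧
            RankGE P A n Δ₁ Δ₂ Ψ lam hs.choose
              (q ∪ ⋃ i, {defFml P (g i).2.2 (Ψ n (g i).1 (g i).2.1 (g i).2.2).2 (d i) (b i)})
    else
      -- limit case
      ∀ β < α, RankGE P A n Δ₁ Δ₂ Ψ lam β p
  termination_by α _ => α
  decreasing_by
  · exact lt_of_lt_of_le
      (by rw [Ordinal.add_one_eq_succ]; exact Order.lt_succ _) hs.choose_spec.ge
  · exact lt_of_lt_of_le
      (by rw [Ordinal.add_one_eq_succ]; exact Order.lt_succ _) hs.choose_spec.ge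
  · assumption

/-- The trivial type `{x̄ = x̄}`. -/
def eqType (L : FirstOrder.Language.{u, u}) (C : Type u) [L.Structure C] (n : ℕ) :
    Set (L.Formula (Fin n ⊕ C)) :=
  Set.range fun i : Fin n =>
    Term.equal (Term.var (Sum.inl i)) (Term.var (Sum.inl i))

/-- Rewrite a type over `A` as a type with parameters from `C`. -/
def toC {n : ℕ} {A : Set C} (p : Set (L.Formula (Fin n ⊕ ↥A))) :
    Set (L.Formula (Fin n ⊕ C)) :=
  (Formula.relabel (Sum.map id (Subtype.val : ↥A → C))) '' p


/-- Observation 3.2: if `M ≺ C` and `P^M ⊆ A ⊆ M`, then `A` is complete. -/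
theorem complete_of_between_P_and_model (P : L.Relations 1) (M A : Set C)
    (hM : IsElementary (L := L) M) (hPM : M ∩ PSet P ⊆ A) (hAM : A ⊆ M) :
    IsComplete P A := by
  intro n
  induction n with
  | zero =>
    rintro m ψ b hb ⟨a, _, hr⟩
    exact ⟨a, fun i => i.elim0, hr⟩
  | succ n ih =>
    rintro m ψ b hb ⟨a, haP, hr⟩
    classical
    set f : Fin (n + 1) ⊕ Fin m → (Fin m ⊕ Fin 1) ⊕ Fin n :=
      Sum.elim (Fin.lastCases (Sum.inl (Sum.inr 0)) (fun i => Sum.inr i))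
        (fun j => Sum.inl (Sum.inl j)) with hf
    set χ : L.Formula (Fin (n + 1) ⊕ Fin m) :=
      (BoundedFormula.iInf fun i : Fin (n + 1) =>
        (P.formula₁ (Term.var (Sum.inl i)) : L.Formula (Fin (n + 1) ⊕ Fin m))) ⊓ ψ with hχ
    have hχr : ∀ v : Fin (n + 1) ⊕ Fin m → C,
        χ.Realize v ↔ (∀ i, v (Sum.inl i) ∈ PSet P) ∧ ψ.Realize v := by
      intro v
      rw [hχ, Formula.realize_inf]
      refine and_congr ?_ Iff.rfl
      rw [Formula.Realize, BoundedFormula.realize_iInf]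
      refine forall_congr' fun i => ?_
      have : ((P.formula₁ (Term.var (Sum.inl i)) : L.Formula (Fin (n + 1) ⊕ Fin m))).Realize v ↔
          Structure.RelMap P ![v (Sum.inl i)] := by
        rw [Formula.realize_rel₁]; simp
      exact this.trans Iff.rfl
    set φ : L.Formula (Fin m ⊕ Fin 1) := (χ.relabel f).iExs (Fin n) with hφ
    have key : ∀ (x : Fin n → C) (y : C),
        (fun a => Sum.elim (Sum.elim b fun _ => y) x (f a)) = Sum.elim (Fin.snoc x y) b := by
      intro x y
      funext a
      rcases a with i | j
      · refine Fin.lastCases ?_ (fun i => ?_) i <;> simp [hf]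
      · simp [hf]
    have hφ_realize : ∀ y : C,
        φ.Realize (Sum.elim b fun _ => y) ↔
          ∃ x : Fin n → C, χ.Realize (Sum.elim (Fin.snoc x y) b) := by
      intro y
      rw [hφ, Formula.realize_iExs]
      exact exists_congr fun x => by rw [Formula.realize_relabel, Function.comp_def, key x y]
    -- apply Tarski–Vaught
    obtain ⟨y, hyM, hy⟩ := hM m φ b (fun i => hAM (hb i))
      ⟨a (Fin.last n), (hφ_realize _).2 ⟨fun i => a i.castSucc, by
        rw [hχr]
        constructor
        · intro i
          simp only [Sum.elim_inl]
          refine Fin.lastCases ?_ (fun i => ?_) i <;>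
            simp only [Fin.snoc_last, Fin.snoc_castSucc] <;> exact haP _
        · have : (Fin.snoc (fun i : Fin n => a i.castSucc) (a (Fin.last n)) : Fin (n+1) → C)
              = a := by
            funext i; refine Fin.lastCases ?_ (fun i => ?_) i <;> simp
          rw [this]; exact hr⟩⟩
    rw [hφ_realize] at hy
    obtain ⟨x, hx⟩ := hy
    rw [hχr] at hx
    have hyP : y ∈ PSet P := by
      have := hx.1 (Fin.last n)
      simpa using this
    have hyA : y ∈ A := hPM ⟨hyM, hyP⟩
    -- now use the IH with the extra parameter y
    set g : Fin (n + 1) ⊕ Fin m → Fin n ⊕ Fin (m + 1) :=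
      Sum.elim (Fin.lastCases (Sum.inr (Fin.last m)) (fun i => Sum.inl i))
        (fun j => Sum.inr j.castSucc) with hg
    set ψ' : L.Formula (Fin n ⊕ Fin (m + 1)) := ψ.relabel g with hψ'
    set b' : Fin (m + 1) → C := Fin.snoc b y with hb'
    have hrel : ∀ x : Fin n → C,
        ψ'.Realize (Sum.elim x b') ↔ ψ.Realize (Sum.elim (Fin.snoc x y) b) := by
      intro x
      rw [hψ', Formula.realize_relabel]
      have : (Sum.elim x b') ∘ g = Sum.elim (Fin.snoc x y) b := by
        funext a
        rcases a with i | j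
        · refine Fin.lastCases ?_ (fun i => ?_) i <;> simp [hg, hb']
        · simp [hg, hb']
      rw [this]
    have hb'A : ∀ j, b' j ∈ A := by
      intro j
      refine Fin.lastCases ?_ (fun j => ?_) j <;> simp [hb']
      exacts [hyA, hb _]
    obtain ⟨x', hx'P, hx'r⟩ := ih (m + 1) ψ' b' hb'A
      ⟨x, fun i => by simpa using hx.1 i.castSucc, (hrel x).2 hx.2⟩
    refine ⟨Fin.snoc x' y, fun i => ?_, ?_⟩
    · refine Fin.lastCases ?_ (fun i => ?_) i <;> simp only [Fin.snoc_last, Fin.snoc_castSucc]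
      exacts [⟨hyP, hyA⟩, hx'P i]
    · exact (hrel x').1 hx'r


end OverP
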